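/- arXiv:2204.10639 — 5 statements merged into one kernel-verified Lean document; each statement's English description precedes it below -/
import Mathlib

section
/- Let V and W be finite-dimensional real vector spaces. Let the hypotheses of the GPT transformation setting hold: C_W ⊆ W is a closed, pointed, full-dimensional convex cone with a linear functional u_W ∈ W* satisfying u_W(s) > 0 for every nonzero s ∈ C_W, and there exists a normalized state μ ∈ interior(C_W) with u_W(μ) = 1; C_V ⊆ V* is a closed, pointed, full-dimensional convex cone with a distinguished element u_V lying in the topological interior of C_V. Then the set DP of discard-preserving linear maps equals the affine hull of the set PM of measure-and-prepare transformations: DP = Aff(PM). That is, every linear map φ : V → W with u_W ∘ φ = u_V can be written as an affine combination (real coefficients summing to 1) of measure-and-prepare transformations, and conversely every affine combination of measure-and-prepare transformations is discard-preserving. -/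
/-!
`DP` is the fibre over `u_V` of the linear map `φ ↦ u_W ∘ φ`, hence an affine subspace containing
`PM`, and its direction `{ψ | u_W ∘ ψ = 0}` is spanned by the rank-one maps `f ⊗ w` with
`u_W w = 0`. Each of these is a multiple of a difference of two measure-and-prepare maps: since
`u_V` and `μ` are interior, `e± = (u_V ± ε f) / 2` are effects summing to `u_V` and `s± = μ ± δ w`
are normalized states, and swapping the states prepared on the two outcomes changes
`e₊ ⊗ s₊ + e₋ ⊗ s₋` by `(e₊ - e₋) ⊗ (s₊ - s₋) = 2εδ f ⊗ w`.
-/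

open Topology

theorem exists_pos_add_smul_mem_and_sub_smul_mem {E : Type*} [AddCommGroup E] [Module ℝ E]
    [TopologicalSpace E] [ContinuousAdd E] [ContinuousSMul ℝ E] {S : Set E} {u : E}
    (hu : u ∈ interior S) (f : E) : ∃ ε : ℝ, 0 < ε ∧ u + ε • f ∈ S ∧ u - ε • f ∈ S := by
  have hline : ∀ᶠ t : ℝ in 𝓝 0, u + t • f ∈ S := by
    have hcont : Continuous fun t : ℝ => u + t • f := by fun_prop
    exact hcont.tendsto 0 (by simpa using mem_interior_iff_mem_nhds.mp hu)
  obtain ⟨ε, hε, hball⟩ := Metric.eventually_nhds_iff.mp hline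
  have hε2 : |ε| / 2 < ε := by rw [abs_of_pos hε]; linarith
  refine ⟨ε / 2, by positivity, hball (by simpa using hε2), ?_⟩
  simpa [sub_eq_add_neg, neg_smul] using hball (y := -(ε / 2)) (by simpa using hε2)

theorem preimage_singleton_eq_affineSpan {k E F : Type*} [Ring k] [AddCommGroup E]
    [Module k E] [AddCommGroup F] [Module k F] (T : E →ₗ[k] F) {s : Set E} {c : F}
    (hs : ∀ x ∈ s, T x = c) (hne : s.Nonempty) (hker : LinearMap.ker T ≤ vectorSpan k s) :
    T ⁻¹' {c} = affineSpan k s := by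
  obtain ⟨p, hp⟩ := hne
  ext x
  constructor
  · intro hx
    have hdir : x - p ∈ (affineSpan k s).direction := by
      rw [direction_affineSpan]
      exact hker (by simp_all [LinearMap.mem_ker])
    simpa using AffineSubspace.vadd_mem_of_mem_direction hdir (subset_affineSpan k s hp)
  · intro hx
    have hle : affineSpan k s ≤ (affineSpan k {c}).comap T.toAffineMap :=
      affineSpan_le.mpr fun y hy => by simp [hs y hy]
    simpa using hle hx

theorem LinearMap.mem_of_forall_smulRight_mem {K V W : Type*} [Field K] [AddCommGroup V]
    [Module K V] [FiniteDimensional K V] [AddCommGroup W] [Module K W]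
    {P : Submodule K (V →ₗ[K] W)} {M : Submodule K W}
    (hP : ∀ f : Module.Dual K V, ∀ w ∈ M, f.smulRight w ∈ P)
    {ψ : V →ₗ[K] W} (hψ : ∀ x, ψ x ∈ M) : ψ ∈ P := by
  let b := Module.finBasis K V
  have hdecomp : ψ = ∑ i, (b.coord i).smulRight (ψ (b i)) :=
    b.ext fun j => by simp [Module.Basis.coord_apply, Finsupp.single_apply]
  rw [hdecomp]
  exact Submodule.sum_mem _ fun i _ => hP _ _ (hψ (b i))

section MeasurePrepare

variable {V W : Type*} [AddCommGroup V] [Module ℝ V] [TopologicalSpace V]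
  [AddCommGroup W] [Module ℝ W]

def measurePrepare (CW : ConvexCone ℝ W) (uW : W →ₗ[ℝ] ℝ) (CV : ConvexCone ℝ (V →L[ℝ] ℝ))
    (uV : V →L[ℝ] ℝ) : Set (V →ₗ[ℝ] W) :=
  {φ | ∃ (k : ℕ) (s : Fin k → W) (e : Fin k → (V →L[ℝ] ℝ)),
    (∀ i, s i ∈ CW ∧ uW (s i) = 1) ∧
    (∀ i, e i ∈ CV ∧ uV - e i ∈ CV) ∧
    (∑ i, e i) = uV ∧
    (∀ x, φ x = ∑ i, e i x • s i)}

variable {CW : ConvexCone ℝ W} {uW : W →ₗ[ℝ] ℝ} {CV : ConvexCone ℝ (V →L[ℝ] ℝ)} {uV : V →L[ℝ] ℝ}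

theorem comp_eq_of_mem_measurePrepare {φ : V →ₗ[ℝ] W} (hφ : φ ∈ measurePrepare CW uW CV uV) :
    uW ∘ₗ φ = uV := by
  obtain ⟨k, s, e, hs, -, hsum, hφ⟩ := hφ
  ext x
  simp [hφ x, ← hsum, (hs _).2]

theorem smulRight_add_smulRight_mem_measurePrepare {e₁ e₂ : V →L[ℝ] ℝ} {s₁ s₂ : W}
    (he₁ : e₁ ∈ CV) (he₂ : e₂ ∈ CV) (hsum : e₁ + e₂ = uV)
    (hs₁ : s₁ ∈ CW) (hs₂ : s₂ ∈ CW) (hu₁ : uW s₁ = 1) (hu₂ : uW s₂ = 1) :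
    (e₁ : V →ₗ[ℝ] ℝ).smulRight s₁ + (e₂ : V →ₗ[ℝ] ℝ).smulRight s₂ ∈
      measurePrepare CW uW CV uV := by
  have hsub₁ : uV - e₁ = e₂ := by rw [← hsum]; abel
  have hsub₂ : uV - e₂ = e₁ := by rw [← hsum]; abel
  refine ⟨2, ![s₁, s₂], ![e₁, e₂], fun i => ?_, fun i => ?_, by simpa using hsum, fun x => ?_⟩
  · fin_cases i <;> simp [hs₁, hs₂, hu₁, hu₂]
  · fin_cases i <;> simp [hsub₁, hsub₂, he₁, he₂]
  · simp [Fin.sum_univ_two]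

end MeasurePrepare

theorem smulRight_mem_vectorSpan_measurePrepare {V W : Type*} [NormedAddCommGroup V]
    [NormedSpace ℝ V] [AddCommGroup W] [Module ℝ W] [TopologicalSpace W] [ContinuousAdd W]
    [ContinuousSMul ℝ W] {CW : ConvexCone ℝ W} {uW : W →ₗ[ℝ] ℝ} {CV : ConvexCone ℝ (V →L[ℝ] ℝ)}
    {uV : V →L[ℝ] ℝ} {μ : W} (hμ : μ ∈ interior (CW : Set W)) (hμ1 : uW μ = 1)
    (huV : uV ∈ interior (CV : Set (V →L[ℝ] ℝ))) (f : V →L[ℝ] ℝ) {w : W} (hw : uW w = 0) :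
    (f : V →ₗ[ℝ] ℝ).smulRight w ∈ vectorSpan ℝ (measurePrepare CW uW CV uV) := by
  obtain ⟨ε, hε, hV₁, hV₂⟩ := exists_pos_add_smul_mem_and_sub_smul_mem huV f
  obtain ⟨δ, hδ, hW₁, hW₂⟩ := exists_pos_add_smul_mem_and_sub_smul_mem hμ w
  set e₁ : V →L[ℝ] ℝ := (2⁻¹ : ℝ) • (uV + ε • f)
  set e₂ : V →L[ℝ] ℝ := (2⁻¹ : ℝ) • (uV - ε • f)
  set s₁ : W := μ + δ • w
  set s₂ : W := μ - δ • w
  have he₁ : e₁ ∈ CV := CV.smul_mem (by norm_num) hV₁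
  have he₂ : e₂ ∈ CV := CV.smul_mem (by norm_num) hV₂
  have hsum : e₁ + e₂ = uV := by module
  have hu₁ : uW s₁ = 1 := by simp [s₁, hμ1, hw]
  have hu₂ : uW s₂ = 1 := by simp [s₂, hμ1, hw]
  have hmem := vsub_mem_vectorSpan ℝ
    (smulRight_add_smulRight_mem_measurePrepare he₁ he₂ hsum hW₁ hW₂ hu₁ hu₂)
    (smulRight_add_smulRight_mem_measurePrepare he₁ he₂ hsum hW₂ hW₁ hu₂ hu₁)
  have hdiff : (e₁ : V →ₗ[ℝ] ℝ).smulRight s₁ + (e₂ : V →ₗ[ℝ] ℝ).smulRight s₂ -ᵥ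
      ((e₁ : V →ₗ[ℝ] ℝ).smulRight s₂ + (e₂ : V →ₗ[ℝ] ℝ).smulRight s₁) =
      (2 * ε * δ) • (f : V →ₗ[ℝ] ℝ).smulRight w := by
    ext x
    simp only [e₁, e₂, s₁, s₂, vsub_eq_sub, LinearMap.sub_apply, LinearMap.add_apply,
      LinearMap.smul_apply, LinearMap.smulRight_apply, ContinuousLinearMap.coe_coe,
      smul_apply, add_apply, sub_apply, smul_eq_mul]
    module
  rw [hdiff] at hmem
  exact (Submodule.smul_mem_iff _ (by positivity)).mp hmem

theorem dp_eq_affineSpan_pm_general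
    {V W : Type*}
    [NormedAddCommGroup V] [NormedSpace ℝ V] [FiniteDimensional ℝ V]
    [NormedAddCommGroup W] [NormedSpace ℝ W]
    -- the state cone `C_W ⊆ W`: closed, pointed, full-dimensional convex cone
    (CW : ConvexCone ℝ W)
    -- the unit functional `u_W`, strictly positive on nonzero cone elements
    (uW : W →ₗ[ℝ] ℝ)
    -- a normalized state `μ` interior to the state cone
    (μ : W) (hμ : μ ∈ interior (CW : Set W)) (hμ1 : uW μ = 1)
    -- the effect cone `C_V ⊆ V*`: closed, pointed, full-dimensional convex cone
    (CV : ConvexCone ℝ (V →L[ℝ] ℝ))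
    -- the discarding effect `u_V`, interior to the effect cone
    (uV : V →L[ℝ] ℝ) (huV : uV ∈ interior (CV : Set (V →L[ℝ] ℝ))) :
    -- `DP = Aff(PM)`
    {φ : V →ₗ[ℝ] W | ∀ x, uW (φ x) = uV x} =
      (affineSpan ℝ
        {φ : V →ₗ[ℝ] W |
          ∃ (k : ℕ) (s : Fin k → W) (e : Fin k → (V →L[ℝ] ℝ)),
            (∀ i, s i ∈ CW ∧ uW (s i) = 1) ∧
            (∀ i, e i ∈ CV ∧ uV - e i ∈ CV) ∧
            (∑ i, e i) = uV ∧
            (∀ x, φ x = ∑ i, e i x • s i)} : Set (V →ₗ[ℝ] W)) := by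
  change _ = (affineSpan ℝ (measurePrepare CW uW CV uV) : Set (V →ₗ[ℝ] W))
  have hDP : {φ : V →ₗ[ℝ] W | ∀ x, uW (φ x) = uV x} =
      LinearMap.compRight ℝ uW ⁻¹' {(uV : V →ₗ[ℝ] ℝ)} := by
    ext φ
    simp [LinearMap.ext_iff]
  have hhalf : (2⁻¹ : ℝ) • uV ∈ CV := CV.smul_mem (by norm_num) (interior_subset huV)
  have hbase := smulRight_add_smulRight_mem_measurePrepare hhalf hhalf (by module)
    (interior_subset hμ) (interior_subset hμ) hμ1 hμ1 (CW := CW)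
  rw [hDP]
  refine preimage_singleton_eq_affineSpan _ (fun φ hφ => comp_eq_of_mem_measurePrepare hφ)
    ⟨_, hbase⟩ fun ψ hψ => ?_
  have hrange : ∀ x, ψ x ∈ LinearMap.ker uW := fun x => by simpa using congrArg (· x) hψ
  refine LinearMap.mem_of_forall_smulRight_mem (fun f w hw => ?_) hrange
  simpa using smulRight_mem_vectorSpan_measurePrepare hμ hμ1 huV f.toContinuousLinearMap hw

/-- Theorem 1 of the paper: in the GPT transformation setting, the set `DP`
of discard-preserving linear maps equals the affine hull of the set `PM` of
measure-and-prepare transformations. -/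
theorem dp_eq_affineSpan_pm
    {V W : Type*}
    [NormedAddCommGroup V] [NormedSpace ℝ V] [FiniteDimensional ℝ V]
    [NormedAddCommGroup W] [NormedSpace ℝ W] [FiniteDimensional ℝ W]
    -- the state cone `C_W ⊆ W`: closed, pointed, full-dimensional convex cone
    (CW : ConvexCone ℝ W) (hCWclosed : IsClosed (CW : Set W))
    (hCWpointed : ∀ x ∈ CW, -x ∈ CW → x = 0)
    (hCWfull : Submodule.span ℝ (CW : Set W) = ⊤)
    -- the unit functional `u_W`, strictly positive on nonzero cone elements
    (uW : W →ₗ[ℝ] ℝ) (huW : ∀ s ∈ CW, s ≠ 0 → 0 < uW s)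
    -- a normalized state `μ` interior to the state cone
    (μ : W) (hμ : μ ∈ interior (CW : Set W)) (hμ1 : uW μ = 1)
    -- the effect cone `C_V ⊆ V*`: closed, pointed, full-dimensional convex cone
    (CV : ConvexCone ℝ (V →L[ℝ] ℝ)) (hCVclosed : IsClosed (CV : Set (V →L[ℝ] ℝ)))
    (hCVpointed : ∀ e ∈ CV, -e ∈ CV → e = 0)
    (hCVfull : Submodule.span ℝ (CV : Set (V →L[ℝ] ℝ)) = ⊤)
    -- the discarding effect `u_V`, interior to the effect cone
    (uV : V →L[ℝ] ℝ) (huV : uV ∈ interior (CV : Set (V →L[ℝ] ℝ))) :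
    -- `DP = Aff(PM)`
    {φ : V →ₗ[ℝ] W | ∀ x, uW (φ x) = uV x} =
      (affineSpan ℝ
        {φ : V →ₗ[ℝ] W |
          ∃ (k : ℕ) (s : Fin k → W) (e : Fin k → (V →L[ℝ] ℝ)),
            (∀ i, s i ∈ CW ∧ uW (s i) = 1) ∧
            (∀ i, e i ∈ CV ∧ uV - e i ∈ CV) ∧
            (∑ i, e i) = uV ∧
            (∀ x, φ x = ∑ i, e i x • s i)} : Set (V →ₗ[ℝ] W)) :=
  dp_eq_affineSpan_pm_general CW uW μ hμ hμ1 CV uV huV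
end

section
/- Let U be a real vector space, let S ⊆ U be a set, and let K = {Σ_{i=1}^n α_i s_i | n finite, α_i ≥ 0, s_i ∈ S} be the cone of finite nonnegative combinations of elements of S. Suppose K is full-dimensional in the sense that U = K − K = {y − z | y, z ∈ K}. Suppose x ∈ K is such that for every s ∈ S there exists t_s > 0 such that x − t·s ∈ K for all t ∈ [0, t_s]. Then x belongs to the core of K, i.e., for every z ∈ U there exists t_z > 0 such that x + t·z ∈ K for all t ∈ [0, t_z]. -/
/-!
The directions in which one can move a short way from a point `x` of a convex set `C` without
leaving `C` form a pointed cone: to move along `v + w`, take the midpoint of the moves along `2 • v`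
and `2 • w`. For the cone `K` generated by `S`, this cone of feasible directions at `x` contains
`K` (as `x ∈ K`) and, by hypothesis, `-S`, hence also `-K`. So it contains `K - K`, which is the
whole space.
-/

open Set Pointwise

section FeasibleDirections

variable {𝕜 E : Type*} [Field 𝕜] [LinearOrder 𝕜] [IsStrictOrderedRing 𝕜]
  [AddCommMonoid E] [Module 𝕜 E]

lemma Convex.add_smul_add_mem {C : Set E} (hC : Convex 𝕜 C) {x v w : E} {t : 𝕜}
    (hv : x + (2 * t) • v ∈ C) (hw : x + (2 * t) • w ∈ C) : x + t • (v + w) ∈ C := by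
  convert hC hv hw (a := 2⁻¹) (b := 2⁻¹) (by norm_num) (by norm_num) (by norm_num) using 1
  module

def Convex.feasibleDirections {C : Set E} (hC : Convex 𝕜 C) {x : E} (hx : x ∈ C) :
    PointedCone 𝕜 E where
  carrier := {w | ∃ ε > (0 : 𝕜), ∀ t ∈ Icc (0 : 𝕜) ε, x + t • w ∈ C}
  zero_mem' := ⟨1, one_pos, fun t _ => by simpa using hx⟩
  add_mem' := by
    rintro v w ⟨ε, hε, hv⟩ ⟨δ, hδ, hw⟩
    refine ⟨min ε δ / 2, by positivity, fun t ⟨ht₀, ht⟩ => hC.add_smul_add_mem ?_ ?_⟩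
    · exact hv _ ⟨by linarith, by linarith [min_le_left ε δ]⟩
    · exact hw _ ⟨by linarith, by linarith [min_le_right ε δ]⟩
  smul_mem' := by
    rintro ⟨c, hc⟩ w ⟨ε, hε, hw⟩
    refine ⟨ε / (c + 1), by positivity, fun t ⟨ht₀, ht⟩ => ?_⟩
    have hct : c * t ≤ ε := by
      calc c * t ≤ (c + 1) * (ε / (c + 1)) := by gcongr; linarith
        _ = ε := mul_div_cancel₀ ε (by positivity)
    simpa [smul_smul] using hw (t * c) ⟨by positivity, by linarith⟩

lemma Convex.mem_feasibleDirections {C : Set E} (hC : Convex 𝕜 C) {x w : E} (hx : x ∈ C) :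
    w ∈ hC.feasibleDirections hx ↔ ∃ ε > (0 : 𝕜), ∀ t ∈ Icc (0 : 𝕜) ε, x + t • w ∈ C :=
  Iff.rfl

lemma PointedCone.le_feasibleDirections (K : PointedCone 𝕜 E) {x : E} (hx : x ∈ K) :
    K ≤ K.convex.feasibleDirections hx :=
  fun _ hy => ⟨1, one_pos, fun _ ht => K.add_mem hx (K.smul_mem ht.1 hy)⟩

end FeasibleDirections

lemma PointedCone.mem_hull_iff_exists_fin_sum {R E : Type*} [Semiring R] [PartialOrder R]
    [IsOrderedRing R] [AddCommMonoid E] [Module R E] {S : Set E} {x : E} :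
    x ∈ hull R S ↔ ∃ (n : ℕ) (α : Fin n → R) (s : Fin n → E),
      (∀ i, 0 ≤ α i) ∧ (∀ i, s i ∈ S) ∧ x = ∑ i, α i • s i := by
  rw [hull, Submodule.mem_span_set']
  constructor
  · rintro ⟨n, α, s, rfl⟩
    exact ⟨n, fun i => α i, fun i => s i, fun i => (α i).2, fun i => (s i).2, rfl⟩
  · rintro ⟨n, α, s, hα, hs, rfl⟩
    exact ⟨n, fun i => ⟨α i, hα i⟩, fun i => ⟨s i, hs i⟩, rfl⟩

/-- Lemma 2 of the paper: let `K` be the cone of finite nonnegative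
combinations of elements of a set `S` in a real vector space `U`, and suppose `K` is
full-dimensional in the sense that `U = K - K`. If `x ∈ K` is such that for every `s ∈ S`
there is `t_s > 0` with `x - t • s ∈ K` for all `t ∈ [0, t_s]`, then `x` is in the core
of `K`: for every `z ∈ U` there is `t_z > 0` with `x + t • z ∈ K` for all `t ∈ [0, t_z]`. -/
theorem mem_core_of_generators
    {U : Type*} [AddCommGroup U] [Module ℝ U]
    (S : Set U)
    (K : Set U)
    (hK : K = {x : U | ∃ (n : ℕ) (α : Fin n → ℝ) (s : Fin n → U),
        (∀ i, 0 ≤ α i) ∧ (∀ i, s i ∈ S) ∧ x = ∑ i, α i • s i})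
    (hfull : ∀ u : U, ∃ y ∈ K, ∃ z ∈ K, u = y - z)
    (x : U) (hx : x ∈ K)
    (hgen : ∀ s ∈ S, ∃ ts > (0 : ℝ), ∀ t ∈ Set.Icc (0 : ℝ) ts, x - t • s ∈ K) :
    ∀ z : U, ∃ tz > (0 : ℝ), ∀ t ∈ Set.Icc (0 : ℝ) tz, x + t • z ∈ K := by
  have hK_hull : K = PointedCone.hull ℝ S := by
    ext y
    rw [hK, mem_ofPred_eq, SetLike.mem_coe, PointedCone.mem_hull_iff_exists_fin_sum]
  subst hK_hull
  set D := (PointedCone.hull ℝ S).convex.feasibleDirections hx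
  have hle : PointedCone.hull ℝ S ≤ D := PointedCone.le_feasibleDirections _ hx
  have hle_neg : PointedCone.hull ℝ S ≤ -D := Submodule.span_le.2 fun s hs =>
    Submodule.mem_neg.2 <| by
      simpa only [D, Convex.mem_feasibleDirections, smul_neg, ← sub_eq_add_neg] using hgen s hs
  intro z
  obtain ⟨y, hy, w, hw, rfl⟩ := hfull z
  rw [← Convex.mem_feasibleDirections, sub_eq_add_neg]
  exact D.add_mem (hle hy) (hle_neg hw)
end

section
/- Let V and W be finite-dimensional real vector spaces with a state cone C_W ⊆ W (closed, pointed, full-dimensional convex cone) with unit functional u_W ∈ W* (positive on nonzero cone elements), and an effect cone C_V ⊆ V* (closed, pointed, full-dimensional convex cone) with discarding effect u_V lying in the topological interior of C_V. Let μ be a normalized state lying in the topological interior of C_W, i.e., μ ∈ interior(C_W) and u_W(μ) = 1. Then the linear map φ_0 : V → W defined by φ_0(x) = u_V(x)·μ belongs to DP ∩ core(K), where DP is the set of discard-preserving linear maps and K is the cone of finite sums of rank-one maps x ↦ e(x)s with s a normalized state and e in the effect cone. -/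
/-! Since `u_V` and `μ` are interior, `c • u_V ± f ∈ C_V` and `d • μ ± w ∈ C_W` for large `c, d`,
and polarization writes `c d (u_V ⊗ μ) + f ⊗ w` as half the sum of `(c u_V + f) ⊗ (d μ + w)` and
`(c u_V - f) ⊗ (d μ - w)`, both in `K`. Expanding an arbitrary `ψ` in a basis of `V` as a sum of
rank-one maps gives `a φ₀ + ψ ∈ K` for some `a ≥ 0`, and then
`φ₀ + t ψ = (1 - t a) φ₀ + t (a φ₀ + ψ) ∈ K` for `0 ≤ t ≤ 1 / (a + 1)`. -/

open Filter Topology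

section ConeLemmas

variable {E : Type*} [AddCommGroup E] [Module ℝ E]

theorem ConvexCone.exists_smul_add_mem_and_smul_sub_mem [TopologicalSpace E] [ContinuousAdd E]
    [ContinuousSMul ℝ E] (C : ConvexCone ℝ E) {x : E} (hx : x ∈ interior (C : Set E)) (y : E) :
    ∃ c > (0 : ℝ), c • x + y ∈ C ∧ c • x - y ∈ C := by
  have hline (z : E) : ∀ᶠ t : ℝ in 𝓝 0, x + t • z ∈ C := by
    have : Tendsto (fun t : ℝ => x + t • z) (𝓝 0) (𝓝 x) := by
      simpa using tendsto_const_nhds.add ((tendsto_id (x := 𝓝 (0 : ℝ))).smul_const z)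
    exact this.eventually (mem_interior_iff_mem_nhds.mp hx)
  obtain ⟨t, ⟨hplus, hminus⟩, ht⟩ :=
    (((hline y).and (hline (-y))).filter_mono nhdsWithin_le_nhds).and
      (self_mem_nhdsWithin (s := Set.Ioi 0)) |>.exists
  refine ⟨t⁻¹, inv_pos.mpr ht, ?_, ?_⟩
  · simpa [smul_add, smul_smul, inv_mul_cancel₀ ht.ne'] using C.smul_mem (inv_pos.mpr ht) hplus
  · simpa [smul_add, smul_smul, inv_mul_cancel₀ ht.ne', sub_eq_add_neg]
      using C.smul_mem (inv_pos.mpr ht) hminus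

theorem ConvexCone.exists_smul_add_sum_mem (C : ConvexCone ℝ E) {x : E} (hx : x ∈ C)
    {ι : Type*} (s : Finset ι) (y : ι → E) (hy : ∀ i ∈ s, ∃ a ≥ (0 : ℝ), a • x + y i ∈ C) :
    ∃ a ≥ (0 : ℝ), a • x + ∑ i ∈ s, y i ∈ C := by
  refine Finset.sum_induction y (fun z => ∃ a ≥ (0 : ℝ), a • x + z ∈ C) ?_ ⟨1, zero_le_one, ?_⟩ hy
  · rintro z z' ⟨a, ha, hz⟩ ⟨a', ha', hz'⟩
    refine ⟨a + a', add_nonneg ha ha', ?_⟩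
    convert C.add_mem hz hz' using 1
    module
  · simpa using hx

theorem ConvexCone.add_smul_mem_of_smul_add_mem (C : ConvexCone ℝ E) {x y : E} (hx : x ∈ C)
    {a : ℝ} (ha : 0 ≤ a) (hy : a • x + y ∈ C) :
    ∃ t₀ > (0 : ℝ), ∀ t ∈ Set.Icc (0 : ℝ) t₀, x + t • y ∈ C := by
  refine ⟨(a + 1)⁻¹, by positivity, fun t ⟨ht0, ht⟩ => ?_⟩
  rcases ht0.eq_or_lt with rfl | ht0
  · simpa using hx
  have hta : t * a < 1 := by
    have : t * (a + 1) ≤ 1 := by rwa [← le_div_iff₀ (by positivity), one_div]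
    nlinarith
  convert C.add_mem (C.smul_mem (sub_pos.mpr hta) hx) (C.smul_mem ht0 hy) using 1
  module

end ConeLemmas

section RankOne

variable {V W : Type*} [AddCommGroup V] [Module ℝ V] [TopologicalSpace V]
  [AddCommGroup W] [Module ℝ W]

/-- The cone `K` of the paper. -/
def rankOneCone (CW : ConvexCone ℝ W) (uW : W →ₗ[ℝ] ℝ) (CV : ConvexCone ℝ (V →L[ℝ] ℝ)) :
    ConvexCone ℝ (V →ₗ[ℝ] W) where
  carrier := {φ : V →ₗ[ℝ] W |
        ∃ (k : ℕ) (s : Fin k → W) (e : Fin k → (V →L[ℝ] ℝ)),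
          (∀ i, s i ∈ CW ∧ uW (s i) = 1) ∧
          (∀ i, e i ∈ CV) ∧
          (∀ x, φ x = ∑ i, e i x • s i)}
  smul_mem' c hc φ := by
    rintro ⟨k, s, e, hs, he, hφ⟩
    exact ⟨k, s, fun i => c • e i, hs, fun i => CV.smul_mem hc (he i),
      fun x => by simp [hφ, Finset.smul_sum, smul_smul]⟩
  add_mem' φ := by
    rintro ⟨k, s, e, hs, he, hφ⟩ ψ ⟨k', s', e', hs', he', hψ⟩
    exact ⟨k + k', Fin.append s s', Fin.append e e', Fin.addCases (fun i => by simpa using hs i) (fun i => by simpa using hs' i),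
      Fin.addCases (fun i => by simpa using he i) (fun i => by simpa using he' i),
      fun x => by simp [hφ, hψ, Fin.sum_univ_add]⟩

variable {CW : ConvexCone ℝ W} {uW : W →ₗ[ℝ] ℝ} {CV : ConvexCone ℝ (V →L[ℝ] ℝ)}

theorem smulRight_mem_rankOneCone (huW : ∀ s ∈ CW, s ≠ 0 → 0 < uW s) {e : V →L[ℝ] ℝ}
    (he : e ∈ CV) {s : W} (hs : s ∈ CW) :
    (e : V →ₗ[ℝ] ℝ).smulRight s ∈ rankOneCone CW uW CV := by
  rcases eq_or_ne s 0 with rfl | hs0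
  · exact ⟨0, Fin.elim0, Fin.elim0, fun i => i.elim0, fun i => i.elim0, by simp⟩
  have hpos := huW s hs hs0
  refine ⟨1, fun _ => (uW s)⁻¹ • s, fun _ => uW s • e, fun _ => ⟨CW.smul_mem (inv_pos.mpr hpos) hs,
    by simp [hpos.ne']⟩, fun _ => CV.smul_mem hpos he, fun x => ?_⟩
  simp only [LinearMap.smulRight_apply, ContinuousLinearMap.coe_coe, Finset.univ_unique,
    Finset.sum_singleton, smul_apply, smul_eq_mul, smul_smul]
  rw [mul_comm (uW s), mul_inv_cancel_right₀ hpos.ne']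

end RankOne

theorem Module.Basis.sum_smulRight_coord {R M N ι : Type*} [CommRing R] [AddCommGroup M]
    [Module R M] [AddCommGroup N] [Module R N] [Fintype ι] (b : Module.Basis ι R M)
    (ψ : M →ₗ[R] N) : ∑ i, (b.coord i).smulRight (ψ (b i)) = ψ :=
  b.ext fun j => by classical simp [Finsupp.single_apply]

section Direction

variable {V W : Type*} [NormedAddCommGroup V] [NormedSpace ℝ V]
  [NormedAddCommGroup W] [NormedSpace ℝ W]
  {CW : ConvexCone ℝ W} {uW : W →ₗ[ℝ] ℝ} {CV : ConvexCone ℝ (V →L[ℝ] ℝ)}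

theorem exists_smul_add_smulRight_mem_rankOneCone (huW : ∀ s ∈ CW, s ≠ 0 → 0 < uW s)
    {uV : V →L[ℝ] ℝ} (huV : uV ∈ interior (CV : Set (V →L[ℝ] ℝ)))
    {μ : W} (hμ : μ ∈ interior (CW : Set W)) (f : V →L[ℝ] ℝ) (w : W) :
    ∃ a ≥ (0 : ℝ), a • (uV : V →ₗ[ℝ] ℝ).smulRight μ + (f : V →ₗ[ℝ] ℝ).smulRight w ∈
      rankOneCone CW uW CV := by
  obtain ⟨c, hc, hfplus, hfminus⟩ := CV.exists_smul_add_mem_and_smul_sub_mem huV f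
  obtain ⟨d, hd, hwplus, hwminus⟩ := CW.exists_smul_add_mem_and_smul_sub_mem hμ w
  refine ⟨c * d, by positivity, ?_⟩
  convert (rankOneCone CW uW CV).add_mem
    (smulRight_mem_rankOneCone huW (CV.smul_mem one_half_pos hfplus) hwplus)
    (smulRight_mem_rankOneCone huW (CV.smul_mem one_half_pos hfminus) hwminus) using 1
  ext x
  simp only [LinearMap.add_apply, LinearMap.smul_apply, LinearMap.smulRight_apply,
    ContinuousLinearMap.coe_coe, smul_apply, add_apply,
    sub_apply, smul_eq_mul]
  module

end Direction

theorem discardPrepare_mem_dp_inter_core_general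
    {V W : Type*}
    [NormedAddCommGroup V] [NormedSpace ℝ V] [FiniteDimensional ℝ V]
    [NormedAddCommGroup W] [NormedSpace ℝ W]
    -- the state cone `C_W ⊆ W`: closed, pointed, full-dimensional convex cone
    (CW : ConvexCone ℝ W)
    -- the unit functional `u_W`, strictly positive on nonzero cone elements
    (uW : W →ₗ[ℝ] ℝ) (huW : ∀ s ∈ CW, s ≠ 0 → 0 < uW s)
    -- the effect cone `C_V ⊆ V*`: closed, pointed, full-dimensional convex cone
    (CV : ConvexCone ℝ (V →L[ℝ] ℝ))
    -- the discarding effect `u_V`, interior to the effect cone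
    (uV : V →L[ℝ] ℝ) (huV : uV ∈ interior (CV : Set (V →L[ℝ] ℝ)))
    -- a normalized state `μ` interior to the state cone
    (μ : W) (hμ : μ ∈ interior (CW : Set W)) (hμ1 : uW μ = 1)
    -- the cone `K` of finite sums of rank-one maps
    (K : Set (V →ₗ[ℝ] W))
    (hK : K = {φ : V →ₗ[ℝ] W |
        ∃ (k : ℕ) (s : Fin k → W) (e : Fin k → (V →L[ℝ] ℝ)),
          (∀ i, s i ∈ CW ∧ uW (s i) = 1) ∧
          (∀ i, e i ∈ CV) ∧
          (∀ x, φ x = ∑ i, e i x • s i)})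
    -- the map `φ₀ : x ↦ u_V(x) • μ`
    (φ0 : V →ₗ[ℝ] W) (hφ0 : ∀ x, φ0 x = uV x • μ) :
    φ0 ∈ {φ : V →ₗ[ℝ] W | ∀ x, uW (φ x) = uV x} ∩
      {φ ∈ K | ∀ ψ : V →ₗ[ℝ] W, ∃ tψ > (0 : ℝ),
        ∀ t ∈ Set.Icc (0 : ℝ) tψ, φ + t • ψ ∈ K} := by
  change K = rankOneCone CW uW CV at hK
  obtain rfl : φ0 = (uV : V →ₗ[ℝ] ℝ).smulRight μ := LinearMap.ext hφ0
  have hφ0K : (uV : V →ₗ[ℝ] ℝ).smulRight μ ∈ rankOneCone CW uW CV :=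
    smulRight_mem_rankOneCone huW (interior_subset huV) (interior_subset hμ)
  refine ⟨fun x => by simp [hμ1], hK ▸ hφ0K, fun ψ => ?_⟩
  let b := Module.finBasis ℝ V
  obtain ⟨a, ha, hψ⟩ := (rankOneCone CW uW CV).exists_smul_add_sum_mem hφ0K Finset.univ
    (fun i => (b.coord i).smulRight (ψ (b i))) fun i _ =>
      exists_smul_add_smulRight_mem_rankOneCone huW huV hμ
        (LinearMap.toContinuousLinearMap (b.coord i)) (ψ (b i))
  rw [b.sum_smulRight_coord] at hψ
  exact hK ▸ (rankOneCone CW uW CV).add_smul_mem_of_smul_add_mem hφ0K ha hψ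

/-- Lemma 3 of the paper: for a normalized state `μ` interior to the state
cone, the linear map `φ₀ : x ↦ u_V(x) • μ` belongs to `DP ∩ core(K)`, where `DP` is the set
of discard-preserving linear maps and `K` is the cone of finite sums of rank-one maps
`x ↦ e(x) • s` with `s` a normalized state and `e` in the effect cone. -/
theorem discardPrepare_mem_dp_inter_core
    {V W : Type*}
    [NormedAddCommGroup V] [NormedSpace ℝ V] [FiniteDimensional ℝ V]
    [NormedAddCommGroup W] [NormedSpace ℝ W] [FiniteDimensional ℝ W]
    -- the state cone `C_W ⊆ W`: closed, pointed, full-dimensional convex cone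
    (CW : ConvexCone ℝ W) (hCWclosed : IsClosed (CW : Set W))
    (hCWpointed : ∀ x ∈ CW, -x ∈ CW → x = 0)
    (hCWfull : Submodule.span ℝ (CW : Set W) = ⊤)
    -- the unit functional `u_W`, strictly positive on nonzero cone elements
    (uW : W →ₗ[ℝ] ℝ) (huW : ∀ s ∈ CW, s ≠ 0 → 0 < uW s)
    -- the effect cone `C_V ⊆ V*`: closed, pointed, full-dimensional convex cone
    (CV : ConvexCone ℝ (V →L[ℝ] ℝ)) (hCVclosed : IsClosed (CV : Set (V →L[ℝ] ℝ)))
    (hCVpointed : ∀ e ∈ CV, -e ∈ CV → e = 0)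
    (hCVfull : Submodule.span ℝ (CV : Set (V →L[ℝ] ℝ)) = ⊤)
    -- the discarding effect `u_V`, interior to the effect cone
    (uV : V →L[ℝ] ℝ) (huV : uV ∈ interior (CV : Set (V →L[ℝ] ℝ)))
    -- a normalized state `μ` interior to the state cone
    (μ : W) (hμ : μ ∈ interior (CW : Set W)) (hμ1 : uW μ = 1)
    -- the cone `K` of finite sums of rank-one maps
    (K : Set (V →ₗ[ℝ] W))
    (hK : K = {φ : V →ₗ[ℝ] W |
        ∃ (k : ℕ) (s : Fin k → W) (e : Fin k → (V →L[ℝ] ℝ)),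
          (∀ i, s i ∈ CW ∧ uW (s i) = 1) ∧
          (∀ i, e i ∈ CV) ∧
          (∀ x, φ x = ∑ i, e i x • s i)})
    -- the map `φ₀ : x ↦ u_V(x) • μ`
    (φ0 : V →ₗ[ℝ] W) (hφ0 : ∀ x, φ0 x = uV x • μ) :
    φ0 ∈ {φ : V →ₗ[ℝ] W | ∀ x, uW (φ x) = uV x} ∩
      {φ ∈ K | ∀ ψ : V →ₗ[ℝ] W, ∃ tψ > (0 : ℝ),
        ∀ t ∈ Set.Icc (0 : ℝ) tψ, φ + t • ψ ∈ K} :=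
  discardPrepare_mem_dp_inter_core_general CW uW huW CV uV huV μ hμ hμ1 K hK φ0 hφ0
end

section
/- Let U be a real vector space, let S ⊆ U be any subset, and let A ⊆ U be an affine subspace (a set closed under affine combinations). If core(S) ∩ A ≠ ∅, then the affine hull of S ∩ A equals A: Aff(S ∩ A) = A. -/
/-- Lemma 4 of the paper: if `S` is any subset of a real vector space `U`
and `A` is an affine subspace of `U` with `core(S) ∩ A ≠ ∅`, then the affine hull of
`S ∩ A` equals `A`. -/
theorem affineSpan_inter_eq_of_core_inter_nonempty
    {U : Type*} [AddCommGroup U] [Module ℝ U]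
    (S : Set U) (A : AffineSubspace ℝ U)
    (hcore : ({x ∈ S | ∀ z : U, ∃ tz > (0 : ℝ),
        ∀ t ∈ Set.Icc (0 : ℝ) tz, x + t • z ∈ S} ∩ (A : Set U)).Nonempty) :
    affineSpan ℝ (S ∩ (A : Set U)) = A := by
  obtain ⟨x, ⟨hxS, hx⟩, hxA⟩ := hcore
  refine le_antisymm ((affineSpan_le).mpr Set.inter_subset_right) ?_
  intro a haA
  obtain ⟨t, ht, hmem⟩ := hx (a - x)
  set y := x + t • (a - x) with hy
  have hyS : y ∈ S := hmem t ⟨le_of_lt ht, le_refl t⟩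
  have hyA : y ∈ A := by
    have := AffineSubspace.smul_vsub_vadd_mem A t haA hxA hxA
    simpa [vsub_eq_sub, vadd_eq_add, hy, add_comm] using this
  have hx' : x ∈ affineSpan ℝ (S ∩ (A : Set U)) :=
    subset_affineSpan ℝ _ ⟨hxS, hxA⟩
  have hy' : y ∈ affineSpan ℝ (S ∩ (A : Set U)) :=
    subset_affineSpan ℝ _ ⟨hyS, hyA⟩
  have key : a = t⁻¹ • (y -ᵥ x) +ᵥ x := by
    rw [hy]
    simp [vsub_eq_sub, vadd_eq_add, smul_smul, inv_mul_cancel₀ (ne_of_gt ht)]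
  rw [key]
  exact AffineSubspace.smul_vsub_vadd_mem _ t⁻¹ hy' hx' hx'
end

section
/- Let n ≥ 1 and let X_1, …, X_n and Y_1, …, Y_n be nonempty finite sets. Let P : (Y_1 × ⋯ × Y_n) × (X_1 × ⋯ × X_n) → ℝ be an n-partite non-signalling stochastic map, i.e.: (i) P(y|x) ≥ 0 for all y, x; (ii) Σ_y P(y|x) = 1 for all x; and (iii) for each party i, the marginal over party i's output, Σ_{y_i ∈ Y_i} P(y_1,…,y_n | x_1,…,x_n), does not depend on x_i (it is unchanged if x_i is replaced by any x_i' ∈ X_i). Then P can be written as an affine (quasiprobabilistic) combination of product stochastic maps: there exist a finite index set A, real numbers q_α (α ∈ A) with Σ_{α ∈ A} q_α = 1, and, for each α and each party i, a stochastic map s_i^α : Y_i × X_i → ℝ (with s_i^α(y_i|x_i) ≥ 0 and Σ_{y_i} s_i^α(y_i|x_i) = 1 for all x_i) such that P(y_1,…,y_n | x_1,…,x_n) = Σ_{α ∈ A} q_α · ∏_{i=1}^n s_i^α(y_i|x_i) for all inputs and outputs. -/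
open Finset

lemma slot_decomp (X Y : Type) [Fintype X] [Nonempty X] [Fintype Y] [Nonempty Y]
    [DecidableEq X] [DecidableEq Y] :
    ∃ (K d : (Unit ⊕ X × Y ⊕ X × Y) → Y → X → ℝ),
      (∀ β y x, 0 ≤ d β y x) ∧ (∀ β x, ∑ y, d β y x = 1) ∧
      (∀ w : Y → X → ℝ, (∀ x x' : X, ∑ y, w y x = ∑ y, w y x') →
        ∀ y x, w y x = ∑ β, (∑ p : Y × X, K β p.1 p.2 * w p.1 p.2) * d β y x) := by
  obtain ⟨y0⟩ := ‹Nonempty Y›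
  obtain ⟨x0⟩ := ‹Nonempty X›
  refine ⟨Sum.elim (fun _ _ x => if x = x0 then (1:ℝ) else 0)
      (Sum.elim (fun p y x => if y = p.2 ∧ x = p.1 then (1:ℝ) else 0)
        (fun p y x => if y = p.2 ∧ x = p.1 then (-1:ℝ) else 0)),
    Sum.elim (fun _ y _ => if y = y0 then (1:ℝ) else 0)
      (Sum.elim (fun p y x => if y = (if x = p.1 then p.2 else y0) then (1:ℝ) else 0)
        (fun _ y _ => if y = y0 then (1:ℝ) else 0)), ?_, ?_, ?_⟩
  · rintro (β | β | β) y x <;> dsimp <;> split_ifs <;> norm_num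
  · rintro (β | ⟨a, b⟩ | β) x <;> simp
  · intro w hw y x
    set S : ℝ := ∑ y, w y x0 with hS
    have hSx : ∀ x : X, ∑ y, w y x = S := fun x => hw x x0
    rw [Fintype.sum_sum_type, Fintype.sum_sum_type]
    simp only [Sum.elim_inl, Sum.elim_inr]
    have h1 : (∑ p : Y × X, (if p.2 = x0 then (1:ℝ) else 0) * w p.1 p.2) = S := by
      rw [Fintype.sum_prod_type]
      simp [ite_mul, hS]
    have h2 : ∀ a : X, ∀ b : Y,
        (∑ p : Y × X, (if p.1 = b ∧ p.2 = a then (1:ℝ) else 0) * w p.1 p.2) = w b a := by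
      intro a b
      rw [Fintype.sum_prod_type]
      simp [ite_and, ite_mul]
    have h3 : ∀ a : X, ∀ b : Y,
        (∑ p : Y × X, (if p.1 = b ∧ p.2 = a then (-1:ℝ) else 0) * w p.1 p.2) = - w b a := by
      intro a b
      rw [Fintype.sum_prod_type]
      simp [ite_and, ite_mul]
    have e2 : (∑ β : X × Y,
        (∑ p : Y × X, (if p.1 = β.2 ∧ p.2 = β.1 then (1:ℝ) else 0) * w p.1 p.2) *
          (if y = (if x = β.1 then β.2 else y0) then (1:ℝ) else 0))
        = w y x + (Fintype.card X - 1) * (if y = y0 then S else 0) := by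
      rw [Fintype.sum_prod_type]
      have key : ∀ a : X, (∑ b : Y,
          (∑ p : Y × X, (if p.1 = b ∧ p.2 = a then (1:ℝ) else 0) * w p.1 p.2) *
            (if y = (if x = a then b else y0) then (1:ℝ) else 0))
          = if x = a then w y x else (if y = y0 then S else 0) := by
        intro a
        by_cases hxa : x = a
        · subst hxa
          simp only [if_pos rfl, h2]
          simp [mul_ite, eq_comm]
        · simp only [if_neg hxa, h2]
          by_cases hy : y = y0 <;> simp [hy, hSx a, mul_ite, Finset.sum_ite_eq]
      rw [Finset.sum_congr rfl (fun a _ => key a)]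
      have key2 : ∀ a : X, (if x = a then w y x else (if y = y0 then S else 0))
          = (if x = a then w y x - (if y = y0 then S else 0) else 0)
              + (if y = y0 then S else 0) := by
        intro a; split <;> ring
      rw [Finset.sum_congr rfl (fun a _ => key2 a), Finset.sum_add_distrib,
        Finset.sum_ite_eq Finset.univ x (fun _ => w y x - (if y = y0 then S else 0))]
      simp only [Finset.mem_univ, if_pos, Finset.sum_const, Finset.card_univ, nsmul_eq_mul]
      split_ifs <;> ring
    have e3 : (∑ β : X × Y,
        (∑ p : Y × X, (if p.1 = β.2 ∧ p.2 = β.1 then (-1:ℝ) else 0) * w p.1 p.2) *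
          (if y = y0 then (1:ℝ) else 0))
        = - (Fintype.card X) * (if y = y0 then S else 0) := by
      rw [Fintype.sum_prod_type]
      have key : ∀ a : X, (∑ b : Y,
          (∑ p : Y × X, (if p.1 = b ∧ p.2 = a then (-1:ℝ) else 0) * w p.1 p.2) *
            (if y = y0 then (1:ℝ) else 0))
          = - (if y = y0 then S else 0) := by
        intro a
        simp only [h3]
        rw [← Finset.sum_mul]
        have : ∑ b : Y, -w b a = -S := by
          rw [Finset.sum_neg_distrib, hSx a]
        rw [this]
        split_ifs <;> ring
      rw [Finset.sum_congr rfl (fun a _ => key a)]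
      simp only [Finset.sum_const, Finset.card_univ, nsmul_eq_mul]
      split_ifs <;> ring
    rw [e2, e3]
    simp only [Finset.univ_unique, Finset.sum_singleton, h1]
    split_ifs <;> ring

theorem aux_decomp : ∀ (n : ℕ) (X Y : Fin n → Type)
    (_ : ∀ i, Fintype (X i)) (_ : ∀ i, Nonempty (X i))
    (_ : ∀ i, Fintype (Y i)) (_ : ∀ i, Nonempty (Y i))
    (G : (∀ i, Y i) → (∀ i, X i) → ℝ),
    (∀ (i : Fin n) (x x' : ∀ j, X j), (∀ j, j ≠ i → x j = x' j) →
      ∀ y : ∀ j, Y j,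
        ∑ yi : Y i, G (Function.update y i yi) x =
          ∑ yi : Y i, G (Function.update y i yi) x') →
    ∃ (m : ℕ) (q : Fin m → ℝ) (s : (α : Fin m) → (i : Fin n) → Y i → X i → ℝ),
      (∀ α i yi xi, 0 ≤ s α i yi xi) ∧
      (∀ α i xi, ∑ yi, s α i yi xi = 1) ∧
      (∀ y x, G y x = ∑ α, q α * ∏ i, s α i (y i) (x i)) := by
  intro n
  induction n with
  | zero =>
    intro X Y _ _ _ _ G _
    refine ⟨1, fun _ => G (fun i => i.elim0) (fun i => i.elim0), fun _ i => i.elim0,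
      fun α i => i.elim0, fun α i => i.elim0, ?_⟩
    intro y x
    have hy : y = fun i => i.elim0 := by funext i; exact i.elim0
    have hx : x = fun i => i.elim0 := by funext i; exact i.elim0
    subst hy; subst hx
    simp
  | succ n ih =>
    intro X Y instX neX instY neY G hns
    letI := fun i => instX i
    letI := fun i => instY i
    letI := fun i => neX i
    letI := fun i => neY i
    classical
    set L : Fin (n + 1) := Fin.last n with hL
    obtain ⟨K, d, hdpos, hdnorm, hspan⟩ := slot_decomp (X L) (Y L)
    let B := (Unit ⊕ X L × Y L ⊕ X L × Y L)
    -- restricted families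
    set Xc : Fin n → Type := fun i => X i.castSucc with hXc
    set Yc : Fin n → Type := fun i => Y i.castSucc with hYc
    -- reduced boxes
    set Gb : B → (∀ i, Yc i) → (∀ i, Xc i) → ℝ :=
      fun β yr xr => ∑ p : Y L × X L,
        K β p.1 p.2 * G (Fin.snoc yr p.1) (Fin.snoc xr p.2) with hGb
    -- each Gb β is non-signalling
    have hnsb : ∀ β (j : Fin n) (xr xr' : ∀ k, Xc k), (∀ k, k ≠ j → xr k = xr' k) →
        ∀ yr : ∀ k, Yc k,
          ∑ yj : Yc j, Gb β (Function.update yr j yj) xr =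
            ∑ yj : Yc j, Gb β (Function.update yr j yj) xr' := by
      intro β j xr xr' hx yr
      simp only [hGb]
      rw [Finset.sum_comm, Finset.sum_comm (s := Finset.univ (α := Yc j))]
      refine Finset.sum_congr rfl fun p _ => ?_
      rw [← Finset.mul_sum, ← Finset.mul_sum]
      congr 1
      have hsx : ∀ k, k ≠ j.castSucc →
          Fin.snoc xr p.2 k = (Fin.snoc xr' p.2 : ∀ k, X k) k := by
        intro k hk
        refine Fin.lastCases ?_ ?_ k (motive := fun k => k ≠ j.castSucc →
          Fin.snoc xr p.2 k = (Fin.snoc xr' p.2 : ∀ k, X k) k) hk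
        · intro _; simp
        · intro k' hk'
          simp only [Fin.snoc_castSucc]
          exact hx k' (fun h => hk' (by rw [h]))
      have := hns j.castSucc (Fin.snoc xr p.2) (Fin.snoc xr' p.2) hsx (Fin.snoc yr p.1)
      calc ∑ yj : Yc j, G (Fin.snoc (Function.update yr j yj) p.1) (Fin.snoc xr p.2)
          = ∑ yj : Yc j, G (Function.update (Fin.snoc yr p.1) j.castSucc yj)
              (Fin.snoc xr p.2) := by
            refine Finset.sum_congr rfl fun yj _ => ?_
            rw [Fin.snoc_update]
        _ = ∑ yj : Yc j, G (Function.update (Fin.snoc yr p.1) j.castSucc yj)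
              (Fin.snoc xr' p.2) := this
        _ = ∑ yj : Yc j, G (Fin.snoc (Function.update yr j yj) p.1) (Fin.snoc xr' p.2) := by
            refine Finset.sum_congr rfl fun yj _ => ?_
            rw [Fin.snoc_update]
    -- apply IH to each Gb β
    choose m q s hspos hsnorm hrep using fun β : B =>
      ih Xc Yc (fun i => instX i.castSucc) (fun i => neX i.castSucc)
        (fun i => instY i.castSucc) (fun i => neY i.castSucc) (Gb β) (hnsb β)
    -- key pointwise decomposition of G
    have hkey : ∀ (y : ∀ i, Y i) (x : ∀ i, X i),
        G y x = ∑ β : B, Gb β (Fin.init y) (Fin.init x) * d β (y L) (x L) := by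
      intro y x
      have hw : ∀ xl xl' : X L,
          ∑ yl, G (Fin.snoc (Fin.init y) yl) (Fin.snoc (Fin.init x) xl) =
            ∑ yl, G (Fin.snoc (Fin.init y) yl) (Fin.snoc (Fin.init x) xl') := by
        intro xl xl'
        have hupdate : ∀ yl : Y L, (Fin.snoc (Fin.init y) yl : ∀ i, Y i) =
            Function.update y L yl := by
          intro yl
          conv_rhs => rw [← Fin.snoc_init_self y]
          rw [Fin.update_snoc_last]
        have hdiff : ∀ k, k ≠ L →
            (Fin.snoc (Fin.init x) xl : ∀ i, X i) k =
              (Fin.snoc (Fin.init x) xl' : ∀ i, X i) k := by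
          intro k hk
          refine Fin.lastCases ?_ ?_ k (motive := fun k => k ≠ L →
            (Fin.snoc (Fin.init x) xl : ∀ i, X i) k =
              (Fin.snoc (Fin.init x) xl' : ∀ i, X i) k) hk
          · intro h; exact absurd rfl h
          · intro k' _; simp
        simp only [hupdate]
        exact hns L _ _ hdiff y
      have := hspan (fun yl xl => G (Fin.snoc (Fin.init y) yl) (Fin.snoc (Fin.init x) xl))
        hw (y L) (x L)
      rw [Fin.snoc_init_self, Fin.snoc_init_self] at this
      rw [this]
    -- assemble
    set I := (β : B) × Fin (m β) with hI
    set M := Fintype.card I with hM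
    set e : Fin M ≃ I := (Fintype.equivFin I).symm with he
    refine ⟨M, fun k => q (e k).1 (e k).2,
      fun k => Fin.snoc (α := fun i => Y i → X i → ℝ) (s (e k).1 (e k).2) (d (e k).1),
      ?_, ?_, ?_⟩
    · intro k i yi xi
      refine Fin.lastCases ?_ ?_ i (motive := fun i => ∀ yi xi,
        0 ≤ Fin.snoc (α := fun i => Y i → X i → ℝ)
          (s (e k).1 (e k).2) (d (e k).1) i yi xi) yi xi
      · intro yi xi; rw [Fin.snoc_last]; exact hdpos _ yi xi
      · intro i yi xi; rw [Fin.snoc_castSucc]; exact hspos _ _ i yi xi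
    · intro k i xi
      refine Fin.lastCases ?_ ?_ i (motive := fun i => ∀ xi,
        ∑ yi, Fin.snoc (α := fun i => Y i → X i → ℝ)
          (s (e k).1 (e k).2) (d (e k).1) i yi xi = 1) xi
      · intro xi; rw [Fin.snoc_last]; exact hdnorm _ xi
      · intro i xi; rw [Fin.snoc_castSucc]; exact hsnorm _ _ i xi
    · intro y x
      rw [hkey y x]
      have hterm : ∀ k : Fin M,
          q (e k).1 (e k).2 * ∏ i : Fin (n+1),
            Fin.snoc (α := fun i => Y i → X i → ℝ)
              (s (e k).1 (e k).2) (d (e k).1) i (y i) (x i)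
          = q (e k).1 (e k).2 *
              (∏ i : Fin n, s (e k).1 (e k).2 i (Fin.init y i) (Fin.init x i)) *
              d (e k).1 (y L) (x L) := by
        intro k
        rw [Fin.prod_univ_castSucc]
        simp only [Fin.snoc_castSucc, Fin.snoc_last]
        rw [mul_assoc]
        rfl
      rw [Finset.sum_congr rfl (fun k _ => hterm k)]
      rw [Equiv.sum_comp e (fun i : I =>
        q i.1 i.2 * (∏ j : Fin n, s i.1 i.2 j (Fin.init y j) (Fin.init x j)) *
          d i.1 (y L) (x L))]
      rw [← Finset.univ_sigma_univ, Finset.sum_sigma]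
      refine Finset.sum_congr rfl fun β _ => ?_
      rw [hrep β (Fin.init y) (Fin.init x), Finset.sum_mul]


/-- classical instance of the paper's main theorem, from
Ref. [al2013simulating]: every `n`-partite non-signalling stochastic map can be written
as an affine (quasiprobabilistic) combination of product stochastic maps. -/
theorem nonsignalling_eq_affine_combination_of_products
    (n : ℕ) (hn : 1 ≤ n)
    (X Y : Fin n → Type)
    [∀ i, Fintype (X i)] [∀ i, Nonempty (X i)]
    [∀ i, Fintype (Y i)] [∀ i, Nonempty (Y i)]
    (P : (∀ i, Y i) → (∀ i, X i) → ℝ)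
    -- (i) nonnegativity
    (hpos : ∀ y x, 0 ≤ P y x)
    -- (ii) normalization
    (hnorm : ∀ x, ∑ y : ∀ i, Y i, P y x = 1)
    -- (iii) non-signalling: the marginal over party i's output does not depend on x_i
    (hns : ∀ (i : Fin n) (x x' : ∀ j, X j), (∀ j, j ≠ i → x j = x' j) →
      ∀ y : ∀ j, Y j,
        ∑ yi : Y i, P (Function.update y i yi) x =
          ∑ yi : Y i, P (Function.update y i yi) x') :
    -- conclusion: affine combination of product stochastic maps
    ∃ (m : ℕ) (q : Fin m → ℝ) (s : (α : Fin m) → (i : Fin n) → Y i → X i → ℝ),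
      (∑ α, q α = 1) ∧
      (∀ α i yi xi, 0 ≤ s α i yi xi) ∧
      (∀ α i xi, ∑ yi, s α i yi xi = 1) ∧
      (∀ y x, P y x = ∑ α, q α * ∏ i, s α i (y i) (x i)) := by
  classical
  obtain ⟨m, q, s, hspos, hsnorm, hrep⟩ :=
    aux_decomp n X Y (fun i => inferInstance) (fun i => inferInstance)
      (fun i => inferInstance) (fun i => inferInstance) P hns
  refine ⟨m, q, s, ?_, hspos, hsnorm, hrep⟩
  -- the weights sum to 1, by normalization
  have x0 : ∀ i, X i := fun i => Classical.arbitrary (X i)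
  have h1 : (1 : ℝ) = ∑ y : ∀ i, Y i, P y x0 := (hnorm x0).symm
  rw [h1]
  have : ∀ y : ∀ i, Y i, P y x0 = ∑ α, q α * ∏ i, s α i (y i) (x0 i) := fun y => hrep y x0
  rw [Finset.sum_congr rfl (fun y _ => this y), Finset.sum_comm]
  refine Finset.sum_congr rfl fun α _ => ?_
  rw [← Finset.mul_sum, ← Fintype.prod_sum (fun i yi => s α i yi (x0 i))]
  have : ∀ i : Fin n, ∑ yi : Y i, s α i yi (x0 i) = 1 := fun i => hsnorm α i (x0 i)
  rw [Finset.prod_congr rfl (fun i _ => this i)]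
  simp
end
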